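/- The Jaccard similarity on finite sets, K(A, B) = |A ∩ B|/|A ∪ B| (with K(∅,∅) := 1), is a symmetric positive semidefinite kernel: for finite sets A_1,…,A_n and reals α_1,…,α_n, ∑_{i,j} α_i α_j K(A_i, A_j) ≥ 0. -/

import Mathlib

/-!
MinHash: rank the elements of a finite ground set by a uniformly random bijection `σ` onto a
linear order and hash a set to its smallest rank. The first element of `A ∪ B` under `σ` is
uniformly distributed on `A ∪ B`, and the hashes of `A` and `B` agree exactly when it lies in
`A ∩ B`, so `K(A, B)` is the probability of a hash collision. A Gram matrix of `K` is therefore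
an average of Gram matrices of kernels `(A, B) ↦ [h A = h B]`, which are sums of squares.
-/

open Finset

section Jaccard

variable {α : Type*} [DecidableEq α]

noncomputable def jaccard (s t : Finset α) : ℝ :=
  if s ∪ t = ∅ then 1 else #(s ∩ t) / #(s ∪ t)

theorem jaccard_comm (s t : Finset α) : jaccard s t = jaccard t s := by
  rw [jaccard, jaccard, union_comm, inter_comm]

theorem jaccard_map {β : Type*} [DecidableEq β] (f : α ↪ β) (s t : Finset α) :
    jaccard (s.map f) (t.map f) = jaccard s t := by
  simp only [jaccard, ← map_union, ← map_inter, map_eq_empty, card_map]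

theorem jaccard_subtype (p : α → Prop) [DecidablePred p] {s t : Finset α}
    (hs : ∀ x ∈ s, p x) (ht : ∀ x ∈ t, p x) :
    jaccard (s.subtype p) (t.subtype p) = jaccard s t := by
  rw [← jaccard_map (Function.Embedding.subtype p), subtype_map_of_mem hs, subtype_map_of_mem ht]

end Jaccard

theorem sum_sum_mul_ite_eq_nonneg {ι β : Type*} [Fintype ι] [DecidableEq β]
    (f : ι → β) (c : ι → ℝ) :
    0 ≤ ∑ i, ∑ j, c i * c j * if f i = f j then 1 else 0 := by
  set g : β → ℝ := fun v ↦ ∑ j with f j = v, c j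
  have hfib : ∀ i, ∑ j, c i * c j * (if f i = f j then 1 else 0) = c i * g (f i) := by
    intro i
    simp only [mul_ite, mul_one, mul_zero, g, mul_sum, sum_filter, eq_comm]
  calc (0 : ℝ) ≤ ∑ v ∈ univ.image f, g v * g v := sum_nonneg fun v _ ↦ mul_self_nonneg _
    _ = ∑ v ∈ univ.image f, ∑ i with f i = v, c i * g (f i) := by
      refine sum_congr rfl fun v _ ↦ ?_
      rw [sum_mul]
      exact sum_congr rfl fun i hi ↦ by rw [(mem_filter.1 hi).2]
    _ = _ := by
      rw [sum_fiberwise_of_maps_to fun i _ ↦ mem_image_of_mem f (mem_univ i)]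
      exact sum_congr rfl fun i _ ↦ (hfib i).symm

namespace MinHash

section Rank

variable {α β : Type*} [LinearOrder β]

def minHash (σ : α ≃ β) (s : Finset α) : WithTop β := (s.image σ).min

theorem minHash_eq_of_forall_le {σ : α ≃ β} {s : Finset α} {a : α} (ha : a ∈ s)
    (h : ∀ b ∈ s, σ a ≤ σ b) : minHash σ s = σ a :=
  le_antisymm (min_le (mem_image_of_mem σ ha))
    (Finset.le_min fun _ hx ↦ by
      obtain ⟨b, hb, rfl⟩ := mem_image.1 hx
      exact WithTop.coe_le_coe.2 (h b hb))

theorem mem_of_minHash_eq {σ : α ≃ β} {s : Finset α} {a : α} (h : minHash σ s = σ a) : a ∈ s := by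
  obtain ⟨b, hb, hba⟩ := mem_image.1 (mem_of_min h)
  rwa [← σ.injective hba]

theorem minHash_eq_minHash_iff [DecidableEq α] (σ : α ≃ β) {s t : Finset α}
    (hst : (s ∪ t).Nonempty) :
    minHash σ s = minHash σ t ↔ ∃ a ∈ s ∩ t, ∀ b ∈ s ∪ t, σ a ≤ σ b := by
  constructor
  · intro h
    obtain ⟨a, ha, hmin⟩ := exists_min_image (s ∪ t) σ hst
    refine ⟨a, ?_, hmin⟩
    rcases mem_union.1 ha with has | hat
    · have hs := minHash_eq_of_forall_le has fun b hb ↦ hmin b (mem_union_left t hb)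
      exact mem_inter.2 ⟨has, mem_of_minHash_eq (h ▸ hs)⟩
    · have ht := minHash_eq_of_forall_le hat fun b hb ↦ hmin b (mem_union_right s hb)
      exact mem_inter.2 ⟨mem_of_minHash_eq (h ▸ ht), hat⟩
  · rintro ⟨a, ha, hmin⟩
    rw [mem_inter] at ha
    rw [minHash_eq_of_forall_le ha.1 fun b hb ↦ hmin b (mem_union_left t hb),
      minHash_eq_of_forall_le ha.2 fun b hb ↦ hmin b (mem_union_right s hb)]

end Rank

section Count

variable {α β : Type*} [Fintype α] [DecidableEq α] [Fintype β] [LinearOrder β]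

def rankedFirst (u : Finset α) (a : α) : Finset (α ≃ β) := {σ | ∀ b ∈ u, σ a ≤ σ b}

theorem pairwiseDisjoint_rankedFirst (u : Finset α) :
    (u : Set α).PairwiseDisjoint (rankedFirst (β := β) u) := by
  intro a ha b hb hab
  refine disjoint_left.2 fun σ hσa hσb ↦ hab (σ.injective ?_)
  simp only [rankedFirst, mem_filter_univ] at hσa hσb
  exact le_antisymm (hσa b hb) (hσb a ha)

theorem biUnion_rankedFirst {u : Finset α} (hu : u.Nonempty) :
    u.biUnion (rankedFirst (β := β) u) = univ :=
  eq_univ_of_forall fun σ ↦ by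
    obtain ⟨a, ha, hmin⟩ := exists_min_image u σ hu
    exact mem_biUnion.2 ⟨a, ha, (mem_filter_univ σ).2 hmin⟩

/-- Precomposing with the transposition of `a` and `b` exchanges their ranks, so no element of
`u` is more likely than another to come first. -/
theorem card_rankedFirst_eq {u : Finset α} {a b : α} (ha : a ∈ u) (hb : b ∈ u) :
    #(rankedFirst (β := β) u a) = #(rankedFirst (β := β) u b) := by
  have hswap : ∀ {a b : α}, a ∈ u → b ∈ u → ∀ σ ∈ rankedFirst (β := β) u a,
      (Equiv.swap a b).trans σ ∈ rankedFirst u b := by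
    intro a b ha hb σ hσ
    simp only [rankedFirst, mem_filter_univ, Equiv.trans_apply, Equiv.swap_apply_right] at hσ ⊢
    exact fun c hc ↦ hσ _ (by rw [Equiv.swap_apply_def]; split_ifs <;> assumption)
  refine card_nbij' _ _ (fun σ ↦ hswap ha hb σ) (fun σ ↦ hswap hb ha σ) ?_ ?_ <;>
    intro σ _ <;> ext <;> simp [Equiv.swap_comm]

theorem card_rankedFirst_mul_card {u : Finset α} {a : α} (ha : a ∈ u) :
    #(rankedFirst (β := β) u a) * #u = Fintype.card (α ≃ β) := by
  calc #(rankedFirst u a) * #u = ∑ b ∈ u, #(rankedFirst (β := β) u b) := by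
        rw [sum_congr rfl fun b hb ↦ card_rankedFirst_eq hb ha, sum_const, smul_eq_mul, mul_comm]
    _ = Fintype.card (α ≃ β) := by
        rw [← card_biUnion (pairwiseDisjoint_rankedFirst u), biUnion_rankedFirst ⟨a, ha⟩, card_univ]

theorem card_minHash_eq_mul_card_union (s t : Finset α) :
    #{σ : α ≃ β | minHash σ s = minHash σ t} * #(s ∪ t) = #(s ∩ t) * Fintype.card (α ≃ β) := by
  rcases (s ∪ t).eq_empty_or_nonempty with hst | hst
  · rw [hst, (union_eq_empty.1 hst).1, (union_eq_empty.1 hst).2]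
    simp
  have hfilter : ({σ : α ≃ β | minHash σ s = minHash σ t} : Finset _) =
      (s ∩ t).biUnion (rankedFirst (s ∪ t)) := by
    ext σ
    simp only [minHash_eq_minHash_iff σ hst, rankedFirst, mem_filter_univ, mem_biUnion]
  rw [hfilter, card_biUnion ((pairwiseDisjoint_rankedFirst _).subset inter_subset_union), sum_mul,
    sum_congr rfl fun a ha ↦ card_rankedFirst_mul_card (inter_subset_union ha), sum_const,
    smul_eq_mul]

theorem jaccard_eq_card_minHash_eq_div [Nonempty (α ≃ β)] (s t : Finset α) :
    jaccard s t = #{σ : α ≃ β | minHash σ s = minHash σ t} / Fintype.card (α ≃ β) := by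
  have hcard : (Fintype.card (α ≃ β) : ℝ) ≠ 0 := Nat.cast_ne_zero.2 Fintype.card_ne_zero
  rcases (s ∪ t).eq_empty_or_nonempty with hst | hst
  · obtain ⟨rfl, rfl⟩ := union_eq_empty.1 hst
    simp [jaccard, hcard]
  · rw [jaccard, if_neg hst.ne_empty, div_eq_div_iff (by simpa using hst.ne_empty) hcard]
    exact_mod_cast (card_minHash_eq_mul_card_union s t).symm

end Count

end MinHash

open MinHash in
theorem jaccard_gram_nonneg_of_fintype {ι α : Type*} [Fintype ι] [Fintype α] [DecidableEq α]
    (A : ι → Finset α) (c : ι → ℝ) : 0 ≤ ∑ i, ∑ j, c i * c j * jaccard (A i) (A j) := by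
  let β := Fin (Fintype.card α)
  have : Nonempty (α ≃ β) := ⟨Fintype.equivFin α⟩
  have hgram : ∑ i, ∑ j, c i * c j * jaccard (A i) (A j) = (Fintype.card (α ≃ β) : ℝ)⁻¹ *
      ∑ σ : α ≃ β, ∑ i, ∑ j, c i * c j * if minHash σ (A i) = minHash σ (A j) then 1 else 0 := by
    simp only [jaccard_eq_card_minHash_eq_div (β := β), ← sum_boole, div_eq_inv_mul, mul_sum]
    symm
    rw [sum_comm]
    refine sum_congr rfl fun i _ ↦ ?_
    rw [sum_comm]
    exact sum_congr rfl fun j _ ↦ sum_congr rfl fun σ _ ↦ by ring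
  rw [hgram]
  exact mul_nonneg (by positivity) (sum_nonneg fun σ _ ↦ sum_sum_mul_ite_eq_nonneg _ c)

theorem jaccard_gram_nonneg {ι α : Type*} [Fintype ι] [DecidableEq α] (A : ι → Finset α)
    (c : ι → ℝ) : 0 ≤ ∑ i, ∑ j, c i * c j * jaccard (A i) (A j) := by
  set U := univ.biUnion A
  have hU : ∀ i, ∀ x ∈ A i, x ∈ U := fun i x hx ↦ mem_biUnion.2 ⟨i, mem_univ i, hx⟩
  simpa only [jaccard_subtype (· ∈ U) (hU _) (hU _)] using
    jaccard_gram_nonneg_of_fintype (fun i ↦ (A i).subtype (· ∈ U)) c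

theorem jaccard_psd {γ : Type*} [DecidableEq γ] :
    (∀ A B : Finset γ,
      (if A ∪ B = ∅ then (1 : ℝ) else ((A ∩ B).card : ℝ) / ((A ∪ B).card : ℝ)) =
      (if B ∪ A = ∅ then (1 : ℝ) else ((B ∩ A).card : ℝ) / ((B ∪ A).card : ℝ))) ∧
    (∀ (n : ℕ) (A : Fin n → Finset γ) (α : Fin n → ℝ),
      0 ≤ ∑ i, ∑ j, α i * α j *
        (if A i ∪ A j = ∅ then (1 : ℝ)
         else ((A i ∩ A j).card : ℝ) / ((A i ∪ A j).card : ℝ))) :=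
  ⟨jaccard_comm, fun _ A α ↦ jaccard_gram_nonneg A α⟩
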